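/- arXiv:2304.10002 — 7 statements merged into one kernel-verified Lean document; each statement's English description precedes it below -/
import Mathlib

section
/- For a generalized highway problem with set of agents N, sections K, cost function C: K → ℝ≥0, and T(i) ⊆ K the set of sections used by agent i (with every section used by someone), the Shapley value of the associated cost game c(S) = Σ_{t ∈ ∪_{i∈S} T(i)} C(t) assigns to each player i the amount Σ_{t ∈ T(i)} C(t)/|N_t|, where N_t = {j ∈ N : t ∈ T(j)}. -/
/-!
Player `i` raises the cost of a coalition `S` exactly by the sections of `T i` that no member of
`S` uses, so its Shapley value splits over `t ∈ T i` into `C t` times the total Shapley weight of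
the coalitions avoiding `N_t = {j | t ∈ T j}`, i.e. of the subsets of the complement of `N_t`.
That total is `1 / |N_t|` (the chance that `i` comes first among `N_t` in a random order); it is
computed by induction on the complement, since adding a player to it merges the weights of
`S` and `S ∪ {a}` into the weight of `S` in the game with one player fewer.
-/

open Finset
open scoped Nat

noncomputable def shapleyWeight (n s : ℕ) : ℝ := (s ! * (n - s - 1)! : ℝ) / n !

lemma shapleyWeight_zero {k : ℕ} (hk : 0 < k) : shapleyWeight k 0 = 1 / k := by
  obtain ⟨j, rfl⟩ : ∃ j, k = j + 1 := ⟨k - 1, by omega⟩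
  rw [shapleyWeight, Nat.sub_zero, Nat.add_sub_cancel, Nat.factorial_zero, Nat.factorial_succ]
  push_cast
  field_simp

lemma shapleyWeight_succ_add_shapleyWeight_succ {n s : ℕ} (hs : s < n) :
    shapleyWeight (n + 1) s + shapleyWeight (n + 1) (s + 1) = shapleyWeight n s := by
  obtain ⟨d, rfl⟩ := Nat.exists_eq_add_of_lt hs
  have h₁ : s + d + 1 + 1 - s - 1 = d + 1 := by omega
  have h₂ : s + d + 1 + 1 - (s + 1) - 1 = d := by omega
  have h₃ : s + d + 1 - s - 1 = d := by omega
  simp only [shapleyWeight, h₁, h₂, h₃, Nat.factorial_succ]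
  push_cast
  field_simp
  ring

lemma sum_powerset_shapleyWeight {α : Type*} [DecidableEq α] (A : Finset α) {k : ℕ}
    (hk : 0 < k) : ∑ S ∈ A.powerset, shapleyWeight (#A + k) #S = 1 / k := by
  induction A using Finset.induction_on with
  | empty => simpa using shapleyWeight_zero hk
  | insert a A ha ih =>
    rw [sum_powerset_insert ha, ← ih, ← sum_add_distrib]
    refine sum_congr rfl fun S hS => ?_
    have hSA : #S ≤ #A := card_le_card (mem_powerset.1 hS)
    rw [card_insert_of_notMem ha, card_insert_of_notMem (notMem_mono (mem_powerset.1 hS) ha),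
      add_right_comm]
    exact shapleyWeight_succ_add_shapleyWeight_succ (by omega)

lemma sum_biUnion_insert_sub_sum_biUnion {ι α M : Type*} [DecidableEq ι] [DecidableEq α]
    [AddCommGroup M] (T : ι → Finset α) (f : α → M) (i : ι) (S : Finset ι) :
    ∑ t ∈ (insert i S).biUnion T, f t - ∑ t ∈ S.biUnion T, f t
      = ∑ t ∈ T i with t ∉ S.biUnion T, f t := by
  rw [biUnion_insert, ← sum_sdiff (subset_union_right (s₁ := T i)), add_sub_cancel_right,
    union_sdiff_right, sdiff_eq_filter]

lemma filter_powerset_erase_notMem_biUnion {ι α : Type*} [Fintype ι] [DecidableEq ι]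
    [DecidableEq α] (T : ι → Finset α) {i : ι} {t : α} (ht : t ∈ T i) :
    {S ∈ (univ.erase i).powerset | t ∉ S.biUnion T} = ({j | t ∉ T j} : Finset ι).powerset := by
  ext S
  simp only [mem_filter, mem_powerset, mem_biUnion, not_exists, not_and, subset_iff, mem_erase,
    mem_univ, and_true, true_and]
  exact ⟨And.right, fun h => ⟨fun j hj (hji : j = i) => h j hj (hji ▸ ht), h⟩⟩

theorem shapley_value_generalized_highway_general
    {N K : Type*} [Fintype N] [DecidableEq N] [DecidableEq K]
    (C : K → ℝ)
    (T : N → Finset K)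
    (c : Finset N → ℝ) (hc : ∀ S : Finset N, c S = ∑ t ∈ S.biUnion T, C t)
    (i : N) :
    (∑ S ∈ ((Finset.univ : Finset N).erase i).powerset,
        ((Nat.factorial S.card * Nat.factorial (Fintype.card N - S.card - 1) : ℝ) /
            (Nat.factorial (Fintype.card N) : ℝ)) * (c (insert i S) - c S))
      = ∑ t ∈ T i, C t / (((Finset.univ : Finset N).filter (fun j => t ∈ T j)).card : ℝ) := by
  have hweight : ∀ t ∈ T i, ∑ S ∈ (univ.erase i).powerset with t ∉ S.biUnion T,
      shapleyWeight (Fintype.card N) #S = 1 / #{j | t ∈ T j} := by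
    intro t ht
    rw [filter_powerset_erase_notMem_biUnion T ht, ← Finset.card_univ,
      ← card_filter_add_card_filter_not (fun j => t ∉ T j)]
    simp only [not_not]
    exact sum_powerset_shapleyWeight _ (card_pos.2 ⟨i, mem_filter.2 ⟨mem_univ _, ht⟩⟩)
  calc _ = ∑ S ∈ (univ.erase i).powerset, ∑ t ∈ T i with t ∉ S.biUnion T,
        shapleyWeight (Fintype.card N) #S * C t := by
        simp_rw [hc, sum_biUnion_insert_sub_sum_biUnion, mul_sum]; rfl
    _ = ∑ t ∈ T i, (∑ S ∈ (univ.erase i).powerset with t ∉ S.biUnion T,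
        shapleyWeight (Fintype.card N) #S) * C t := by
        simp_rw [sum_filter, sum_mul, ite_mul, zero_mul]
        exact sum_comm
    _ = _ := sum_congr rfl fun t ht => by rw [hweight t ht, one_div_mul_eq_div]

/-- In a generalized highway problem, the Shapley value of the
associated cost game assigns to player `i` the amount `∑_{t ∈ T(i)} C(t)/|N_t|`. -/
theorem shapley_value_generalized_highway
    {N K : Type*} [Fintype N] [DecidableEq N] [Fintype K] [DecidableEq K]
    (C : K → ℝ) (hC : ∀ t, 0 ≤ C t)
    (T : N → Finset K) (hT : ∀ i, (T i).Nonempty)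
    (hK : ∀ t : K, ∃ i, t ∈ T i)
    (c : Finset N → ℝ) (hc : ∀ S : Finset N, c S = ∑ t ∈ S.biUnion T, C t)
    (i : N) :
    (∑ S ∈ ((Finset.univ : Finset N).erase i).powerset,
        ((Nat.factorial S.card * Nat.factorial (Fintype.card N - S.card - 1) : ℝ) /
            (Nat.factorial (Fintype.card N) : ℝ)) * (c (insert i S) - c S))
      = ∑ t ∈ T i, C t / (((Finset.univ : Finset N).filter (fun j => t ∈ T j)).card : ℝ) :=
  shapley_value_generalized_highway_general C T c hc i
end

section
/- For a generalized highway problem whose sections are all shared (|N_t| > 1 for every section t), the lower payoff of each player i in the associated cost game equals c({i}), i.e., m_i(N,c) = min_{S ∋ i} (c(S) − Σ_{j ∈ S\{i}} M_j(N,c)) = Σ_{t ∈ T(i)} C(t). -/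
/-!
If every section is used by at least two players, removing one player never removes a section, so
every utopia payoff `c(N) - c(N \ {j})` vanishes. The lower payoff is then the minimum of `c(S)` over
coalitions `S ∋ i`, which the monotone game attains at `S = {i}`.
-/

open Finset

section UtopiaPayoff

variable {N : Type*} [Fintype N] [DecidableEq N]

def utopiaPayoff (c : Finset N → ℝ) (j : N) : ℝ :=
  c univ - c (univ.erase j)

theorem isLeast_lower_payoff_of_utopiaPayoff_nonpos {c : Finset N → ℝ} (hc : Monotone c)
    (hM : ∀ j, utopiaPayoff c j ≤ 0) (i : N) :
    IsLeast {x : ℝ | ∃ S : Finset N, i ∈ S ∧ x = c S - ∑ j ∈ S.erase i, utopiaPayoff c j}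
      (c {i}) := by
  constructor
  · exact ⟨{i}, mem_singleton_self i, by simp⟩
  · rintro x ⟨S, hiS, rfl⟩
    calc c {i} ≤ c S := hc (singleton_subset_iff.2 hiS)
      _ ≤ c S - ∑ j ∈ S.erase i, utopiaPayoff c j := by
        linarith [sum_nonpos fun j (_ : j ∈ S.erase i) => hM j]

end UtopiaPayoff

section Highway

variable {N K : Type*} [DecidableEq K]

def highwayCost (T : N → Finset K) (C : K → ℝ) (S : Finset N) : ℝ :=
  ∑ t ∈ S.biUnion T, C t

theorem highwayCost_monotone (T : N → Finset K) {C : K → ℝ} (hC : ∀ t, 0 ≤ C t) :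
    Monotone (highwayCost T C) := fun _ _ hST =>
  sum_le_sum_of_subset_of_nonneg (biUnion_subset_biUnion_of_subset_left T hST)
    fun t _ _ => hC t

theorem highwayCost_singleton [DecidableEq N] (T : N → Finset K) (C : K → ℝ) (i : N) :
    highwayCost T C {i} = ∑ t ∈ T i, C t := by
  rw [highwayCost, singleton_biUnion]

theorem biUnion_erase_eq_of_shared [Fintype N] [DecidableEq N] {T : N → Finset K}
    (hshared : ∀ t : K, 1 < (univ.filter fun j => t ∈ T j).card) (j : N) :
    (univ.erase j).biUnion T = univ.biUnion T := by
  refine (biUnion_subset_biUnion_of_subset_left T (erase_subset j univ)).antisymm fun t _ => ?_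
  obtain ⟨k, hk, hkj⟩ := (one_lt_card_iff_nontrivial.1 (hshared t)).exists_ne j
  exact mem_biUnion.2 ⟨k, mem_erase.2 ⟨hkj, mem_univ k⟩, (mem_filter.1 hk).2⟩

theorem utopiaPayoff_highwayCost_eq_zero [Fintype N] [DecidableEq N] {T : N → Finset K}
    (C : K → ℝ) (hshared : ∀ t : K, 1 < (univ.filter fun j => t ∈ T j).card) (j : N) :
    utopiaPayoff (highwayCost T C) j = 0 := by
  rw [utopiaPayoff, highwayCost, highwayCost, biUnion_erase_eq_of_shared hshared, sub_self]

end Highway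

theorem lower_payoff_generalized_highway_all_shared_general
    {N K : Type*} [Fintype N] [DecidableEq N] [DecidableEq K]
    (C : K → ℝ) (hC : ∀ t, 0 ≤ C t)
    (T : N → Finset K)
    (hshared : ∀ t : K, 1 < ((Finset.univ : Finset N).filter (fun j => t ∈ T j)).card)
    (c : Finset N → ℝ) (hc : ∀ S : Finset N, c S = ∑ t ∈ S.biUnion T, C t)
    (i : N) :
    IsLeast {x : ℝ | ∃ S : Finset N, i ∈ S ∧
        x = c S - ∑ j ∈ S.erase i, (c Finset.univ - c (Finset.univ.erase j))}
      (∑ t ∈ T i, C t) := by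
  obtain rfl : c = highwayCost T C := funext hc
  rw [← highwayCost_singleton]
  exact isLeast_lower_payoff_of_utopiaPayoff_nonpos (highwayCost_monotone T hC)
    (fun j => (utopiaPayoff_highwayCost_eq_zero C hshared j).le) i

/-- If every section of a generalized highway problem is shared
(`|N_t| > 1` for all `t`), then the lower payoff of each player `i`, i.e. the
minimum over coalitions `S ∋ i` of `c(S) − Σ_{j ∈ S\{i}} M_j(N,c)`, equals
`c({i}) = Σ_{t ∈ T(i)} C(t)`. -/
theorem lower_payoff_generalized_highway_all_shared
    {N K : Type*} [Fintype N] [DecidableEq N] [Fintype K] [DecidableEq K]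
    (C : K → ℝ) (hC : ∀ t, 0 ≤ C t)
    (T : N → Finset K) (hT : ∀ i, (T i).Nonempty)
    (hK : ∀ t : K, ∃ i, t ∈ T i)
    (hshared : ∀ t : K, 1 < ((Finset.univ : Finset N).filter (fun j => t ∈ T j)).card)
    (c : Finset N → ℝ) (hc : ∀ S : Finset N, c S = ∑ t ∈ S.biUnion T, C t)
    (i : N) :
    IsLeast {x : ℝ | ∃ S : Finset N, i ∈ S ∧
        x = c S - ∑ j ∈ S.erase i, (c Finset.univ - c (Finset.univ.erase j))}
      (∑ t ∈ T i, C t) :=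
  lower_payoff_generalized_highway_all_shared_general C hC T hshared c hc i
end

section
/- In a generalized highway game with a priori unions, the total Owen-value payment of an alliance a* formed by merging unions 1,…,a (2 ≤ a ≤ A) never exceeds the sum of the Owen-value payments those unions received before merging: Ψ_{a*}(N,c,P*) ≤ Σ_{α=1}^{a} Ψ_α(N,c,P). Moreover the inequality is strict if and only if some section is used by at least two of the merging unions and also by at least one union outside the alliance. -/
/-!
Count every section `t` used by the alliance once per merging union that uses it. If `m ≥ 1`
merging unions and `o` outside unions use `t`, the unions paid `m · C(t)/(m + o)` for it before
the merger and the alliance pays `C(t)/(o + 1)` after it. The difference is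
`C(t) · o (m - 1) / ((m + o)(o + 1)) ≥ 0`, positive exactly when `m ≥ 2` and `o ≥ 1`.
-/

open Finset

lemma mul_div_add_sub_div_add_one {c m o : ℝ} (hmo : m + o ≠ 0) (ho : o + 1 ≠ 0) :
    m * (c / (m + o)) - c / (o + 1) = c * (o * (m - 1)) / ((m + o) * (o + 1)) := by
  field_simp
  ring

lemma div_add_one_le_mul_div_add {c m o : ℝ} (hc : 0 ≤ c) (hm : 1 ≤ m) (ho : 0 ≤ o) :
    c / (o + 1) ≤ m * (c / (m + o)) := by
  have : 0 ≤ m - 1 := sub_nonneg.2 hm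
  rw [← sub_nonneg, mul_div_add_sub_div_add_one (by positivity) (by positivity)]
  positivity

lemma div_add_one_lt_mul_div_add_iff {c m o : ℝ} (hc : 0 < c) (hm : 1 ≤ m) (ho : 0 ≤ o) :
    c / (o + 1) < m * (c / (m + o)) ↔ 1 < m ∧ 0 < o := by
  have hmo : 0 < m + o := by positivity
  have ho' : 0 < o + 1 := by positivity
  rw [← sub_pos, mul_div_add_sub_div_add_one hmo.ne' ho'.ne',
    div_pos_iff_of_pos_right (mul_pos hmo ho'), mul_pos_iff_of_pos_left hc]
  constructor
  · intro h
    exact ⟨sub_pos.1 (pos_of_mul_pos_right h ho), pos_of_mul_pos_left h (sub_nonneg.2 hm)⟩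
  · rintro ⟨h1, h2⟩
    exact mul_pos h2 (sub_pos.2 h1)

section Alliance

variable {ι K : Type*} [DecidableEq K] (U : ι → Finset K)

/-- `userCount U univ t` is the paper's `|𝒜_t|` when `U b = T(P_b)`. -/
def userCount (s : Finset ι) (t : K) : ℕ := #(s.filter (t ∈ U ·))

lemma userCount_pos_iff {s : Finset ι} {t : K} :
    0 < userCount U s t ↔ ∃ b ∈ s, t ∈ U b := by
  rw [userCount, card_pos, filter_nonempty_iff]

lemma userCount_add_userCount_compl [Fintype ι] [DecidableEq ι] (s : Finset ι) (t : K) :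
    userCount U s t + userCount U sᶜ t = userCount U univ t := by
  simp only [userCount, card_filter]
  exact sum_add_sum_compl s _

lemma sum_sum_eq_sum_biUnion_userCount_smul {M : Type*} [AddCommMonoid M]
    (B : Finset ι) (f : K → M) :
    ∑ b ∈ B, ∑ t ∈ U b, f t = ∑ t ∈ B.biUnion U, userCount U B t • f t := by
  rw [sum_comm' (t' := B.biUnion U) (s' := fun t => B.filter (t ∈ U ·))]
  · simp only [userCount, sum_const]
  · intro b t
    simp only [mem_filter, mem_biUnion]
    exact ⟨fun ⟨hb, ht⟩ => ⟨⟨hb, ht⟩, b, hb, ht⟩, fun ⟨h, _⟩ => h⟩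

variable [Fintype ι] [DecidableEq ι] (B : Finset ι) (C : K → ℝ)

lemma alliance_cost_share_le {t : K} (hC : 0 ≤ C t) (ht : t ∈ B.biUnion U) :
    C t / (userCount U Bᶜ t + 1) ≤ userCount U B t • (C t / userCount U univ t) := by
  rw [nsmul_eq_mul, ← userCount_add_userCount_compl U B, Nat.cast_add]
  exact div_add_one_le_mul_div_add hC
    (Nat.one_le_cast.2 ((userCount_pos_iff U).2 (mem_biUnion.1 ht))) (Nat.cast_nonneg _)

lemma alliance_cost_share_lt_iff {t : K} (hC : 0 < C t) (ht : t ∈ B.biUnion U) :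
    C t / (userCount U Bᶜ t + 1) < userCount U B t • (C t / userCount U univ t) ↔
      1 < userCount U B t ∧ ∃ b ∉ B, t ∈ U b := by
  rw [nsmul_eq_mul, ← userCount_add_userCount_compl U B, Nat.cast_add,
    div_add_one_lt_mul_div_add_iff hC
      (Nat.one_le_cast.2 ((userCount_pos_iff U).2 (mem_biUnion.1 ht))) (Nat.cast_nonneg _),
    Nat.one_lt_cast, Nat.cast_pos, userCount_pos_iff]
  simp only [mem_compl]

theorem alliance_payment_le (hC : ∀ t, 0 ≤ C t) :
    ∑ t ∈ B.biUnion U, C t / (userCount U Bᶜ t + 1) ≤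
      ∑ b ∈ B, ∑ t ∈ U b, C t / userCount U univ t := by
  rw [sum_sum_eq_sum_biUnion_userCount_smul]
  exact sum_le_sum fun t ht => alliance_cost_share_le U B C (hC t) ht

theorem alliance_payment_lt_iff (hC : ∀ t, 0 < C t) :
    ∑ t ∈ B.biUnion U, C t / (userCount U Bᶜ t + 1) <
      ∑ b ∈ B, ∑ t ∈ U b, C t / userCount U univ t ↔
      ∃ t, 1 < userCount U B t ∧ ∃ b ∉ B, t ∈ U b := by
  have hle : ∀ t ∈ B.biUnion U, _ := fun t ht =>
    alliance_cost_share_le U B C (hC t).le ht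
  rw [sum_sum_eq_sum_biUnion_userCount_smul, (sum_le_sum hle).lt_iff_ne, Ne,
    sum_eq_sum_iff_of_le hle]
  simp only [not_forall]
  constructor
  · rintro ⟨t, ht, hne⟩
    exact ⟨t, (alliance_cost_share_lt_iff U B C (hC t) ht).1 ((hle t ht).lt_of_ne hne)⟩
  · rintro ⟨t, hm, hout⟩
    have ht : t ∈ B.biUnion U :=
      mem_biUnion.2 ((userCount_pos_iff U).1 (zero_lt_one.trans hm))
    exact ⟨t, ht, ((alliance_cost_share_lt_iff U B C (hC t) ht).2 ⟨hm, hout⟩).ne⟩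

end Alliance

theorem owen_alliance_beneficial_general
    {N K : Type*} [DecidableEq K]
    (C : K → ℝ) (hC : ∀ t, 0 < C t)
    (T : N → Finset K)
    (A a : ℕ)
    (Pp : Fin A → Finset N) :
    let U : Fin A → Finset K := fun b => (Pp b).biUnion T
    let At : K → ℕ := fun t => ((Finset.univ : Finset (Fin A)).filter (fun b => t ∈ U b)).card
    let B : Finset (Fin A) := Finset.univ.filter (fun b => (b : ℕ) < a)
    let UA : Finset K := B.biUnion U
    let Ats : K → ℕ := fun t =>
      (Finset.univ.filter (fun b : Fin A => a ≤ (b : ℕ) ∧ t ∈ U b)).card +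
        (if t ∈ UA then 1 else 0)
    ((∑ t ∈ UA, C t / (Ats t : ℝ)) ≤ ∑ b ∈ B, ∑ t ∈ U b, C t / (At t : ℝ)) ∧
    ((∑ t ∈ UA, C t / (Ats t : ℝ)) < (∑ b ∈ B, ∑ t ∈ U b, C t / (At t : ℝ)) ↔
      ∃ t : K, 1 < (B.filter (fun b => t ∈ U b)).card ∧
        ∃ b : Fin A, a ≤ (b : ℕ) ∧ t ∈ U b) := by
  intro U At B UA Ats
  have hout : ∀ b, b ∉ B ↔ a ≤ (b : ℕ) := by simp [B]
  have hAts : ∀ t ∈ UA, (Ats t : ℝ) = userCount U Bᶜ t + 1 := by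
    intro t ht
    have hfilter :
        univ.filter (fun b : Fin A => a ≤ (b : ℕ) ∧ t ∈ U b) = Bᶜ.filter (t ∈ U ·) := by
      ext b
      simp [← hout]
    simp only [Ats, userCount, if_pos ht, hfilter, Nat.cast_add, Nat.cast_one]
  rw [sum_congr rfl fun t ht => congrArg (C t / ·) (hAts t ht)]
  refine ⟨alliance_payment_le U B C fun t => (hC t).le, ?_⟩
  refine (alliance_payment_lt_iff U B C hC).trans ?_
  simp only [hout]
  rfl

/-- Under the Owen value, merging unions `1,…,a` (of `A`) into an
alliance never increases their total payment, with strict decrease iff some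
section is used by at least two merging unions and by a union outside the
alliance.  (Union `b`'s Owen payment is `Σ_{t ∈ T(P_b)} C(t)/|𝒜_t|`.) -/
theorem owen_alliance_beneficial
    {N K : Type*} [Fintype N] [DecidableEq N] [Fintype K] [DecidableEq K]
    (C : K → ℝ) (hC : ∀ t, 0 < C t)
    (T : N → Finset K) (hT : ∀ i, (T i).Nonempty)
    (hK : ∀ t : K, ∃ i, t ∈ T i)
    (A a : ℕ) (ha2 : 2 ≤ a) (haA : a ≤ A)
    (Pp : Fin A → Finset N)
    (hdis : ∀ b b' : Fin A, b ≠ b' → Disjoint (Pp b) (Pp b'))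
    (hcov : ∀ i : N, ∃ b : Fin A, i ∈ Pp b)
    (hne : ∀ b : Fin A, (Pp b).Nonempty) :
    let U : Fin A → Finset K := fun b => (Pp b).biUnion T
    let At : K → ℕ := fun t => ((Finset.univ : Finset (Fin A)).filter (fun b => t ∈ U b)).card
    let B : Finset (Fin A) := Finset.univ.filter (fun b => (b : ℕ) < a)
    let UA : Finset K := B.biUnion U
    let Ats : K → ℕ := fun t =>
      (Finset.univ.filter (fun b : Fin A => a ≤ (b : ℕ) ∧ t ∈ U b)).card +
        (if t ∈ UA then 1 else 0)
    ((∑ t ∈ UA, C t / (Ats t : ℝ)) ≤ ∑ b ∈ B, ∑ t ∈ U b, C t / (At t : ℝ)) ∧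
    ((∑ t ∈ UA, C t / (Ats t : ℝ)) < (∑ b ∈ B, ∑ t ∈ U b, C t / (At t : ℝ)) ↔
      ∃ t : K, 1 < (B.filter (fun b => t ∈ U b)).card ∧
        ∃ b : Fin A, a ≤ (b : ℕ) ∧ t ∈ U b) :=
  owen_alliance_beneficial_general C hC T A a Pp
end

section
/- Let (N,K,C,T) be a generalized highway problem and c its associated game. If every section is exclusive (|N_t| = 1 for all t), the Tijs value of player i equals c^e(i) = Σ_{t ∈ T^e(i)} C(t). If some section is shared, then the Tijs value of player i equals c^e(i) + c^s(N)·c^s(i)/Σ_{j∈N} c^s(j), where c^e(i) is the total cost of i's exclusive sections, c^s(i) the total cost of i's shared sections, and c^s(N) the total cost of all shared sections. -/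
/-!
Exclusive sections of distinct players are disjoint, so the cost of a coalition splits as the sum
of its members' exclusive costs plus the cost of the shared sections it uses. A shared section has
a second user, so removing one player from the grand coalition saves exactly its exclusive cost:
`M_i = c^e(i)`. The lower payoff is attained at the singleton `{i}` and equals `c^e(i) + c^s(i)`,
since any coalition containing `i` uses all of `i`'s shared sections. Hence
`τ_i = c^e(i) + (1 - α) c^s(i)`, and efficiency forces `(1 - α) Σ_j c^s(j) = c^s(N)`.
-/

open Finset

namespace HighwayGame

variable {N K R : Type*} [Fintype N] [DecidableEq K] (T : N → Finset K)

def users (t : K) : Finset N := univ.filter fun j => t ∈ T j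

def sharedSections [Fintype K] : Finset K := univ.filter fun t => 1 < (users T t).card

variable {T}

@[simp]
theorem mem_users {t : K} {j : N} : j ∈ users T t ↔ t ∈ T j := by
  simp [users]

theorem card_users_pos (hK : ∀ t : K, ∃ i, t ∈ T i) (t : K) : 0 < (users T t).card :=
  let ⟨i, hi⟩ := hK t
  card_pos.2 ⟨i, mem_users.2 hi⟩

theorem filter_card_users_ne_one (hK : ∀ t : K, ∃ i, t ∈ T i) (s : Finset K) :
    s.filter (fun t => ¬ (users T t).card = 1) = s.filter fun t => 1 < (users T t).card :=
  filter_congr fun t _ => by have := card_users_pos hK t; omega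

theorem pairwiseDisjoint_exclusive (S : Set N) :
    S.PairwiseDisjoint fun j => (T j).filter fun t => (users T t).card = 1 := by
  intro j₁ _ j₂ _ hne
  refine Finset.disjoint_left.2 fun t ht₁ ht₂ => hne ?_
  rw [mem_filter] at ht₁ ht₂
  exact card_le_one.1 ht₁.2.le _ (mem_users.2 ht₁.1) _ (mem_users.2 ht₂.1)

section AddCommMonoid

variable [AddCommMonoid R] (T) (C : K → R)

def cost (S : Finset N) : R := ∑ t ∈ S.biUnion T, C t

def exclusiveCost (i : N) : R := ∑ t ∈ (T i).filter fun t => (users T t).card = 1, C t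

def sharedCost (i : N) : R := ∑ t ∈ (T i).filter fun t => 1 < (users T t).card, C t

variable {T}

theorem sum_filter_exclusive_biUnion (S : Finset N) :
    ∑ t ∈ (S.biUnion T).filter (fun t => (users T t).card = 1), C t
      = ∑ j ∈ S, exclusiveCost T C j := by
  rw [filter_biUnion, sum_biUnion (pairwiseDisjoint_exclusive _)]
  rfl

theorem cost_eq_sum_exclusiveCost_add (hK : ∀ t : K, ∃ i, t ∈ T i) (S : Finset N) :
    cost T C S = ∑ j ∈ S, exclusiveCost T C j
      + ∑ t ∈ (S.biUnion T).filter (fun t => 1 < (users T t).card), C t := by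
  rw [cost, ← sum_filter_add_sum_filter_not _ fun t => (users T t).card = 1,
    filter_card_users_ne_one hK, sum_filter_exclusive_biUnion]

theorem cost_singleton (hK : ∀ t : K, ∃ i, t ∈ T i) (i : N) :
    cost T C {i} = exclusiveCost T C i + sharedCost T C i := by
  rw [cost_eq_sum_exclusiveCost_add C hK, sum_singleton, singleton_biUnion, sharedCost]

variable [Fintype K]

theorem cost_univ (hK : ∀ t : K, ∃ i, t ∈ T i) :
    cost T C univ = ∑ j, exclusiveCost T C j + ∑ t ∈ sharedSections T, C t := by
  have hcover : univ.biUnion T = univ := eq_univ_of_forall fun t => by simpa using hK t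
  rw [cost_eq_sum_exclusiveCost_add C hK, hcover, sharedSections]

theorem sharedCost_eq_zero (h : sharedSections T = ∅) (i : N) : sharedCost T C i = 0 := by
  refine sum_eq_zero fun t ht => absurd ?_ (notMem_empty t)
  rw [← h, sharedSections, mem_filter]
  exact ⟨mem_univ t, (mem_filter.1 ht).2⟩

end AddCommMonoid

variable [DecidableEq N]

theorem filter_shared_biUnion_erase (i : N) :
    ((univ.erase i).biUnion T).filter (fun t => 1 < (users T t).card)
      = (univ.biUnion T).filter fun t => 1 < (users T t).card := by
  ext t
  simp only [mem_filter, mem_biUnion, mem_erase, mem_univ, and_true, true_and]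
  refine ⟨fun ⟨⟨j, _, hj⟩, hs⟩ => ⟨⟨j, hj⟩, hs⟩, fun ⟨_, hs⟩ => ⟨?_, hs⟩⟩
  obtain ⟨j, hj, hji⟩ := exists_mem_ne hs i
  exact ⟨j, hji, mem_users.1 hj⟩

variable [AddCommGroup R] (C : K → R)

theorem cost_univ_sub_cost_erase (hK : ∀ t : K, ∃ i, t ∈ T i) (i : N) :
    cost T C univ - cost T C (univ.erase i) = exclusiveCost T C i := by
  rw [cost_eq_sum_exclusiveCost_add C hK, cost_eq_sum_exclusiveCost_add C hK,
    filter_shared_biUnion_erase, sum_erase_eq_sub (mem_univ i)]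
  abel

theorem isLeast_cost_sub_sum_erase_exclusiveCost [PartialOrder R] [IsOrderedAddMonoid R]
    (hC : ∀ t, 0 ≤ C t) (hK : ∀ t : K, ∃ i, t ∈ T i) (i : N) :
    IsLeast {x | ∃ S : Finset N, i ∈ S ∧ x = cost T C S - ∑ j ∈ S.erase i, exclusiveCost T C j}
      (exclusiveCost T C i + sharedCost T C i) := by
  refine ⟨⟨{i}, mem_singleton_self i, by simp [cost_singleton C hK]⟩, ?_⟩
  rintro _ ⟨S, hiS, rfl⟩
  have hshared : sharedCost T C i
      ≤ ∑ t ∈ (S.biUnion T).filter (fun t => 1 < (users T t).card), C t :=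
    sum_le_sum_of_subset_of_nonneg (filter_subset_filter _ (subset_biUnion_of_mem T hiS))
      fun t _ _ => hC t
  rw [cost_eq_sum_exclusiveCost_add C hK, ← add_sum_erase S _ hiS, add_right_comm,
    add_sub_cancel_right, add_le_add_iff_left]
  exact hshared

end HighwayGame

open HighwayGame in
theorem tijs_value_generalized_highway_general
    {N K : Type*} [Fintype N] [DecidableEq N] [Fintype K] [DecidableEq K]
    (C : K → ℝ) (hC : ∀ t, 0 ≤ C t)
    (T : N → Finset K)
    (hK : ∀ t : K, ∃ i, t ∈ T i)
    (c : Finset N → ℝ) (hc : ∀ S : Finset N, c S = ∑ t ∈ S.biUnion T, C t)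
    -- utopia payoffs
    (Mv : N → ℝ) (hMv : ∀ i, Mv i = c Finset.univ - c (Finset.univ.erase i))
    -- lower payoffs: minimum over coalitions containing `i`
    (m : N → ℝ)
    (hm : ∀ i, IsLeast {x : ℝ | ∃ S : Finset N, i ∈ S ∧
        x = c S - ∑ j ∈ S.erase i, Mv j} (m i))
    -- the Tijs value: `τ_i = m_i + α(M_i − m_i)` with `α` normalizing to efficiency
    (α : ℝ)
    (heff : ∑ i : N, (m i + α * (Mv i - m i)) = c Finset.univ)
    -- exclusive and shared costs
    (ce cs : N → ℝ)
    (hce : ∀ i, ce i = ∑ t ∈ (T i).filter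
        (fun t => ((Finset.univ : Finset N).filter (fun j => t ∈ T j)).card = 1), C t)
    (hcs : ∀ i, cs i = ∑ t ∈ (T i).filter
        (fun t => 1 < ((Finset.univ : Finset N).filter (fun j => t ∈ T j)).card), C t)
    (Ks : Finset K)
    (hKs : Ks = Finset.univ.filter
        (fun t => 1 < ((Finset.univ : Finset N).filter (fun j => t ∈ T j)).card))
    (hden : Ks.Nonempty → 0 < ∑ j : N, cs j) :
    ∀ i : N,
      (Ks = ∅ → m i + α * (Mv i - m i) = ce i) ∧
      (Ks.Nonempty → m i + α * (Mv i - m i)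
          = ce i + (∑ t ∈ Ks, C t) * cs i / ∑ j : N, cs j) := by
  obtain rfl : c = cost T C := funext hc
  obtain rfl : ce = exclusiveCost T C := funext hce
  obtain rfl : cs = sharedCost T C := funext hcs
  obtain rfl : Ks = sharedSections T := hKs
  obtain rfl : Mv = exclusiveCost T C :=
    funext fun i => (hMv i).trans (cost_univ_sub_cost_erase C hK i)
  have hvalue : ∀ i, m i + α * (exclusiveCost T C i - m i)
      = exclusiveCost T C i + (1 - α) * sharedCost T C i := fun i => by
    rw [(hm i).unique (isLeast_cost_sub_sum_erase_exclusiveCost C hC hK i)]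
    ring
  have htotal : (1 - α) * ∑ j, sharedCost T C j = ∑ t ∈ sharedSections T, C t := by
    rw [sum_congr rfl fun i _ => hvalue i, sum_add_distrib, cost_univ C hK, ← mul_sum] at heff
    exact add_left_cancel heff
  intro i
  rw [hvalue i]
  refine ⟨fun hempty => ?_, fun hne => ?_⟩
  · rw [sharedCost_eq_zero C hempty, mul_zero, add_zero]
  · rw [← htotal]
    field_simp [(hden hne).ne']

/-- Tijs value of a generalized highway game.  If every section is
exclusive, player `i` receives `c^e(i)`; if some section is shared, player `i`
receives `c^e(i) + c^s(N)·c^s(i)/Σ_j c^s(j)`. -/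
theorem tijs_value_generalized_highway
    {N K : Type*} [Fintype N] [DecidableEq N] [Fintype K] [DecidableEq K]
    (C : K → ℝ) (hC : ∀ t, 0 ≤ C t)
    (T : N → Finset K) (hT : ∀ i, (T i).Nonempty)
    (hK : ∀ t : K, ∃ i, t ∈ T i)
    (c : Finset N → ℝ) (hc : ∀ S : Finset N, c S = ∑ t ∈ S.biUnion T, C t)
    -- utopia payoffs
    (Mv : N → ℝ) (hMv : ∀ i, Mv i = c Finset.univ - c (Finset.univ.erase i))
    -- lower payoffs: minimum over coalitions containing `i`
    (m : N → ℝ)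
    (hm : ∀ i, IsLeast {x : ℝ | ∃ S : Finset N, i ∈ S ∧
        x = c S - ∑ j ∈ S.erase i, Mv j} (m i))
    -- the Tijs value: `τ_i = m_i + α(M_i − m_i)` with `α` normalizing to efficiency
    (α : ℝ) (hα0 : 0 ≤ α) (hα1 : α ≤ 1)
    (heff : ∑ i : N, (m i + α * (Mv i - m i)) = c Finset.univ)
    -- exclusive and shared costs
    (ce cs : N → ℝ)
    (hce : ∀ i, ce i = ∑ t ∈ (T i).filter
        (fun t => ((Finset.univ : Finset N).filter (fun j => t ∈ T j)).card = 1), C t)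
    (hcs : ∀ i, cs i = ∑ t ∈ (T i).filter
        (fun t => 1 < ((Finset.univ : Finset N).filter (fun j => t ∈ T j)).card), C t)
    (Ks : Finset K)
    (hKs : Ks = Finset.univ.filter
        (fun t => 1 < ((Finset.univ : Finset N).filter (fun j => t ∈ T j)).card))
    (hden : Ks.Nonempty → 0 < ∑ j : N, cs j) :
    ∀ i : N,
      (Ks = ∅ → m i + α * (Mv i - m i) = ce i) ∧
      (Ks.Nonempty → m i + α * (Mv i - m i)
          = ce i + (∑ t ∈ Ks, C t) * cs i / ∑ j : N, cs j) :=
  tijs_value_generalized_highway_general C hC T hK c hc Mv hMv m hm α heff ce cs hce hcs Ks hKs hden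
end

section
/- Let (N,K,C,T,P) be a generalized highway problem with a priori unions and let a* be the alliance obtained by merging unions 1,…,a (2 ≤ a ≤ A). Suppose no section that was shared between unions in the original quotient game becomes exclusive to the alliance in the modified quotient game (K_{P*}^{se} = ∅). Then the coalitional-Tijs total assigned to the alliance satisfies 𝒯_{a*}(N,c,P*) ≤ Σ_{α=1}^{a} 𝒯_α(N,c,P), with strict inequality if and only if the alliance shares the use of some section with a union outside it and some section is used by at least two unions of the alliance. -/
open Finset

/-!
Under `K_{P*}^{se} = ∅` a section is shared after the merger exactly when it was shared before.
Hence the alliance keeps the exclusive cost `∑ c^e(α)` of its members, the total shared cost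
`M = c^s(M)` is unchanged, and so is the shared cost `Y` of the outside unions. Only the
alliance's own shared cost changes: from `X = ∑ c^s(α)`, which counts a section once for every
member using it, to `x = c^s(a*) ≤ X`, which counts it once. As `x ↦ M x / (x + Y)` is strictly
increasing, the alliance's share does not increase, and it decreases iff some section is used by
two members.
Such a section was shared, so by `K_{P*}^{se} = ∅` an outside union also uses it.
-/

theorem Finset.sum_lt_sum_iff_exists_lt {α M : Type*} [AddCommMonoid M] [PartialOrder M]
    [IsOrderedCancelAddMonoid M] {s : Finset α} {f g : α → M}
    (h : ∀ i ∈ s, f i ≤ g i) :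
    ∑ i ∈ s, f i < ∑ i ∈ s, g i ↔ ∃ i ∈ s, f i < g i := by
  rw [(sum_le_sum h).lt_iff_ne, Ne, sum_eq_sum_iff_of_le h]
  simp only [not_forall, exists_prop]
  exact exists_congr fun i => and_congr_right fun hi => (h i hi).lt_iff_ne.symm

theorem strictMonoOn_mul_div_add {𝕜 : Type*} [Field 𝕜] [LinearOrder 𝕜]
    [IsStrictOrderedRing 𝕜] {M Y : 𝕜} (hM : 0 < M) (hY : 0 < Y) :
    StrictMonoOn (fun x => M * x / (x + Y)) (Set.Ici 0) := by
  intro x hx y hy hxy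
  simp only [Set.mem_Ici] at hx hy
  rw [div_lt_div_iff₀ (by linarith) (by linarith)]
  nlinarith [mul_pos (mul_pos hM hY) (sub_pos.2 hxy)]

theorem ite_pos_le_mul {R : Type*} [Semiring R] [LinearOrder R] [IsStrictOrderedRing R]
    (n : ℕ) {c : R} (hc : 0 ≤ c) : (if 0 < n then c else 0) ≤ n * c := by
  split_ifs with hn
  · exact le_mul_of_one_le_left hc (Nat.one_le_cast.2 hn)
  · positivity

theorem ite_pos_lt_mul_iff {R : Type*} [Semiring R] [LinearOrder R] [IsStrictOrderedRing R]
    (n : ℕ) {c : R} (hc : 0 < c) :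
    (if 0 < n then c else 0) < n * c ↔ 1 < n := by
  split_ifs with hn
  · rw [lt_mul_iff_one_lt_left hc, Nat.one_lt_cast]
  · simp [Nat.eq_zero_of_not_pos hn]

namespace Highway

variable {ι K : Type*} (U : ι → Finset K) (C : K → ℝ)

def useCount [DecidableEq K] (s : Finset ι) (t : K) : ℕ := #{b ∈ s | t ∈ U b}

def mergedCount [Fintype ι] [DecidableEq ι] [DecidableEq K] (B : Finset ι) (t : K) : ℕ :=
  useCount U Bᶜ t + if t ∈ B.biUnion U then 1 else 0

def exclCost [DecidableEq K] (n : K → ℕ) (s : Finset K) : ℝ := ∑ t ∈ s with n t = 1, C t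

def sharedCost [DecidableEq K] (n : K → ℕ) (s : Finset K) : ℝ := ∑ t ∈ s with 1 < n t, C t

/-- The coalitional-Tijs total `c^e(s) + c^s(M) c^s(s) / D` of a union using the sections `s`,
for usage counts `n`; `D` is the sum of `c^s` over all unions of the game. -/
noncomputable def tijsTotal [Fintype K] [DecidableEq K] (n : K → ℕ) (s : Finset K) (D : ℝ) :
    ℝ :=
  if ({t | 1 < n t} : Finset K) = ∅ then exclCost C n s
  else exclCost C n s + sharedCost C n univ * sharedCost C n s / D

theorem mem_biUnion_iff_useCount_pos [DecidableEq K] {B : Finset ι} {t : K} :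
    t ∈ B.biUnion U ↔ 0 < useCount U B t := by
  simp [useCount, card_pos, filter_nonempty_iff]

theorem useCount_le_useCount_univ [Fintype ι] [DecidableEq K] (s : Finset ι) (t : K) :
    useCount U s t ≤ useCount U univ t :=
  card_le_card (filter_subset_filter _ (subset_univ s))

theorem useCount_univ [Fintype ι] [DecidableEq ι] [DecidableEq K] (B : Finset ι) (t : K) :
    useCount U univ t = useCount U B t + useCount U Bᶜ t := by
  simp only [useCount, card_filter, sum_add_sum_compl]

theorem sum_sum_filter_eq_sum_useCount_mul [Fintype K] [DecidableEq K] (s : Finset ι)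
    (p : K → Prop) [DecidablePred p] :
    ∑ b ∈ s, ∑ t ∈ U b with p t, C t = ∑ t with p t, (useCount U s t : ℝ) * C t := by
  rw [sum_comm' (t' := {t | p t}) (s' := fun t => {b ∈ s | t ∈ U b})]
  · simp [useCount]
  · intro b t
    simp only [mem_filter, mem_univ, true_and]
    tauto

theorem sum_filter_biUnion_eq [Fintype K] [DecidableEq K] (B : Finset ι)
    (p : K → Prop) [DecidablePred p] :
    ∑ t ∈ B.biUnion U with p t, C t =
      ∑ t with p t, if 0 < useCount U B t then C t else 0 := by
  rw [← sum_filter]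
  congr 1
  ext t
  simp only [mem_filter, mem_univ, true_and, mem_biUnion_iff_useCount_pos]
  tauto

theorem exclCost_biUnion [Fintype ι] [Fintype K] [DecidableEq K] (B : Finset ι) :
    exclCost C (useCount U univ) (B.biUnion U) =
      ∑ b ∈ B, exclCost C (useCount U univ) (U b) := by
  simp only [exclCost]
  rw [sum_filter_biUnion_eq, sum_sum_filter_eq_sum_useCount_mul]
  refine sum_congr rfl fun t ht => ?_
  have : useCount U B t ≤ 1 := (mem_filter.1 ht).2 ▸ useCount_le_useCount_univ U B t
  interval_cases useCount U B t <;> simp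

theorem sharedCost_biUnion_le [Fintype ι] [Fintype K] [DecidableEq K] (hC : ∀ t, 0 ≤ C t)
    (B : Finset ι) :
    sharedCost C (useCount U univ) (B.biUnion U) ≤
      ∑ b ∈ B, sharedCost C (useCount U univ) (U b) := by
  simp only [sharedCost]
  rw [sum_filter_biUnion_eq, sum_sum_filter_eq_sum_useCount_mul]
  exact sum_le_sum fun t _ => ite_pos_le_mul _ (hC t)

theorem sharedCost_biUnion_lt_iff [Fintype ι] [Fintype K] [DecidableEq K] (hC : ∀ t, 0 < C t)
    (B : Finset ι) :
    sharedCost C (useCount U univ) (B.biUnion U) <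
        ∑ b ∈ B, sharedCost C (useCount U univ) (U b) ↔ ∃ t, 1 < useCount U B t := by
  simp only [sharedCost]
  rw [sum_filter_biUnion_eq, sum_sum_filter_eq_sum_useCount_mul,
    sum_lt_sum_iff_exists_lt fun t _ => ite_pos_le_mul _ (hC t).le]
  simp only [mem_filter, mem_univ, true_and, ite_pos_lt_mul_iff _ (hC _)]
  exact ⟨fun ⟨t, _, ht⟩ => ⟨t, ht⟩,
    fun ⟨t, ht⟩ => ⟨t, ht.trans_le (useCount_le_useCount_univ U B t), ht⟩⟩

theorem sum_tijsTotal [Fintype K] [DecidableEq K] (n : K → ℕ) (B : Finset ι) (D : ℝ)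
    (hS : ({t | 1 < n t} : Finset K) ≠ ∅) :
    ∑ b ∈ B, tijsTotal C n (U b) D =
      ∑ b ∈ B, exclCost C n (U b) +
        sharedCost C n univ * (∑ b ∈ B, sharedCost C n (U b)) / D := by
  simp only [tijsTotal, if_neg hS, sum_add_distrib, mul_sum, sum_div]

section Merge

variable [Fintype ι] [DecidableEq ι] [DecidableEq K]

/-- The paper's condition `K_{P*}^{se} = ∅`. -/
def SharedStaysShared (B : Finset ι) : Prop :=
  ∀ t, 1 < useCount U univ t → 1 < mergedCount U B t

variable {B : Finset ι}

theorem mergedCount_eq (t : K) :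
    mergedCount U B t = useCount U Bᶜ t + if 0 < useCount U B t then 1 else 0 := by
  simp only [mergedCount, mem_biUnion_iff_useCount_pos]

theorem one_lt_mergedCount_iff (hse : SharedStaysShared U B) (t : K) :
    1 < mergedCount U B t ↔ 1 < useCount U univ t := by
  have := hse t
  rw [mergedCount_eq, useCount_univ U B] at this ⊢
  split_ifs at this ⊢ <;> omega

theorem mergedCount_eq_one_iff (hse : SharedStaysShared U B)
    {t : K} (ht : t ∈ B.biUnion U) : mergedCount U B t = 1 ↔ useCount U univ t = 1 := by
  have := hse t
  rw [mem_biUnion_iff_useCount_pos] at ht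
  rw [mergedCount_eq, useCount_univ U B, if_pos ht] at this ⊢
  omega

theorem useCount_compl_pos (hse : SharedStaysShared U B)
    {t : K} (ht : 1 < useCount U univ t) : 0 < useCount U Bᶜ t := by
  have := hse t ht
  rw [mergedCount] at this
  split_ifs at this <;> omega

theorem sharedCost_mergedCount (hse : SharedStaysShared U B) (s : Finset K) :
    sharedCost C (mergedCount U B) s = sharedCost C (useCount U univ) s := by
  simp only [sharedCost, one_lt_mergedCount_iff U hse]

theorem tijsTotal_mergedCount [Fintype K] (hse : SharedStaysShared U B) (D : ℝ) :
    tijsTotal C (mergedCount U B) (B.biUnion U) D =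
      tijsTotal C (useCount U univ) (B.biUnion U) D := by
  have hexcl : exclCost C (mergedCount U B) (B.biUnion U) =
      exclCost C (useCount U univ) (B.biUnion U) :=
    sum_congr (filter_congr fun t ht => mergedCount_eq_one_iff U hse ht) fun _ _ => rfl
  simp only [tijsTotal, hexcl, sharedCost_mergedCount U C hse, one_lt_mergedCount_iff U hse]

theorem sum_compl_sharedCost_pos [Fintype K] (hC : ∀ t, 0 < C t) (hse : SharedStaysShared U B)
    (hS : ({t | 1 < useCount U univ t} : Finset K) ≠ ∅) :
    0 < ∑ b ∈ Bᶜ, sharedCost C (useCount U univ) (U b) := by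
  obtain ⟨t, ht⟩ := nonempty_iff_ne_empty.2 hS
  replace ht : 1 < useCount U univ t := (mem_filter.1 ht).2
  obtain ⟨b, hb⟩ := card_pos.1 (useCount_compl_pos U hse ht)
  rw [mem_filter] at hb
  calc 0 < C t := hC t
    _ ≤ sharedCost C (useCount U univ) (U b) :=
      single_le_sum (fun t _ => (hC t).le) (mem_filter.2 ⟨hb.2, ht⟩)
    _ ≤ _ := single_le_sum (f := fun b => sharedCost C (useCount U univ) (U b))
      (fun b _ => sum_nonneg fun t _ => (hC t).le) hb.1

theorem tijsTotal_merge_le_and_lt_iff [Fintype K] (hC : ∀ t, 0 < C t)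
    (hse : SharedStaysShared U B) :
    tijsTotal C (mergedCount U B) (B.biUnion U)
        (sharedCost C (mergedCount U B) (B.biUnion U) +
          ∑ b ∈ Bᶜ, sharedCost C (mergedCount U B) (U b)) ≤
      ∑ b ∈ B, tijsTotal C (useCount U univ) (U b)
        (∑ b', sharedCost C (useCount U univ) (U b')) ∧
    (tijsTotal C (mergedCount U B) (B.biUnion U)
        (sharedCost C (mergedCount U B) (B.biUnion U) +
          ∑ b ∈ Bᶜ, sharedCost C (mergedCount U B) (U b)) <
      ∑ b ∈ B, tijsTotal C (useCount U univ) (U b)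
        (∑ b', sharedCost C (useCount U univ) (U b')) ↔
        ∃ t, 1 < useCount U B t) := by
  rw [tijsTotal_mergedCount U C hse]
  simp only [sharedCost_mergedCount U C hse]
  by_cases hS : ({t | 1 < useCount U univ t} : Finset K) = ∅
  · have hno : ¬∃ t, 1 < useCount U B t := fun ⟨t, ht⟩ =>
      filter_eq_empty_iff.1 hS (mem_univ t) (ht.trans_le (useCount_le_useCount_univ U B t))
    simp only [tijsTotal, if_pos hS, exclCost_biUnion, le_refl, lt_irrefl, hno, and_self]
  · have hM : 0 < sharedCost C (useCount U univ) univ :=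
      sum_pos (fun t _ => hC t) (nonempty_iff_ne_empty.2 hS)
    have hmono := strictMonoOn_mul_div_add hM (sum_compl_sharedCost_pos U C hC hse hS)
    have hx : sharedCost C (useCount U univ) (B.biUnion U) ∈ Set.Ici 0 :=
      sum_nonneg fun t _ => (hC t).le
    have hX : ∑ b ∈ B, sharedCost C (useCount U univ) (U b) ∈ Set.Ici 0 :=
      sum_nonneg fun b _ => sum_nonneg fun t _ => (hC t).le
    rw [tijsTotal, if_neg hS, sum_tijsTotal U C _ B _ hS, ← exclCost_biUnion,
      ← sum_add_sum_compl B, add_le_add_iff_left, add_lt_add_iff_left]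
    exact ⟨(hmono.le_iff_le hx hX).2 (sharedCost_biUnion_le U C (fun t => (hC t).le) B),
      (hmono.lt_iff_lt hx hX).trans (sharedCost_biUnion_lt_iff U C hC B)⟩

end Merge

end Highway

open Highway

theorem coalitional_tijs_alliance_general
    {N K : Type*} [Fintype K] [DecidableEq K]
    (C : K → ℝ) (hC : ∀ t, 0 < C t)
    (T : N → Finset K)
    (A a : ℕ)
    (Pp : Fin A → Finset N) :
    -- sections used by each union, and union-level usage counts (original game)
    let U : Fin A → Finset K := fun b => (Pp b).biUnion T
    let At : K → ℕ := fun t => ((Finset.univ : Finset (Fin A)).filter (fun b => t ∈ U b)).card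
    let cPe : Fin A → ℝ := fun b => ∑ t ∈ (U b).filter (fun t => At t = 1), C t
    let cPs : Fin A → ℝ := fun b => ∑ t ∈ (U b).filter (fun t => 1 < At t), C t
    let cPsM : ℝ := ∑ t ∈ Finset.univ.filter (fun t : K => 1 < At t), C t
    -- coalitional-Tijs total of union `b` in the original game
    let TT : Fin A → ℝ := fun b =>
      if Finset.univ.filter (fun t : K => 1 < At t) = ∅ then cPe b
      else cPe b + cPsM * cPs b / ∑ b' : Fin A, cPs b'
    -- the alliance of unions `1,…,a` and the modified game
    let B : Finset (Fin A) := Finset.univ.filter (fun b => (b : ℕ) < a)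
    let UA : Finset K := B.biUnion U
    let Outs : K → Finset (Fin A) := fun t =>
      Finset.univ.filter (fun b : Fin A => a ≤ (b : ℕ) ∧ t ∈ U b)
    let Ats : K → ℕ := fun t => (Outs t).card + (if t ∈ UA then 1 else 0)
    let cPeA : ℝ := ∑ t ∈ UA.filter (fun t => Ats t = 1), C t
    let cPsA : ℝ := ∑ t ∈ UA.filter (fun t => 1 < Ats t), C t
    let cPsO : Fin A → ℝ := fun b => ∑ t ∈ (U b).filter (fun t => 1 < Ats t), C t
    let cPsMs : ℝ := ∑ t ∈ Finset.univ.filter (fun t : K => 1 < Ats t), C t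
    -- coalitional-Tijs total of the alliance in the modified game
    let TTA : ℝ :=
      if Finset.univ.filter (fun t : K => 1 < Ats t) = ∅ then cPeA
      else cPeA + cPsMs * cPsA /
        (cPsA + ∑ b ∈ Finset.univ.filter (fun b : Fin A => a ≤ (b : ℕ)), cPsO b)
    -- hypothesis `K_{P*}^{se} = ∅`: no union-shared section becomes exclusive
    ∀ _hse : (∀ t : K, 1 < At t → 1 < Ats t),
    TTA ≤ (∑ b ∈ B, TT b) ∧
      (TTA < (∑ b ∈ B, TT b) ↔
        (∃ t ∈ UA, (Outs t).Nonempty) ∧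
          ∃ t : K, 1 < (B.filter (fun b => t ∈ U b)).card) := by
  intro U At cPe cPs cPsM TT B UA Outs Ats cPeA cPsA cPsO cPsMs TTA hse
  have hO : ({b | a ≤ (b : ℕ)} : Finset (Fin A)) = Bᶜ := by ext; simp [B]
  have hAts : Ats = mergedCount U B := by
    funext t
    simp only [Ats, Outs, mergedCount, useCount, ← hO, filter_filter]
    rfl
  rw [hAts] at hse
  obtain ⟨hle, hlt⟩ := tijsTotal_merge_le_and_lt_iff U C hC hse
  rw [← hAts, ← hO] at hle hlt
  refine ⟨hle, hlt.trans ⟨fun hB => ⟨?_, hB⟩, And.right⟩⟩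
  obtain ⟨t, ht⟩ := hB
  have hcompl := useCount_compl_pos U hse (ht.trans_le (useCount_le_useCount_univ U B t))
  rw [← hO, useCount, filter_filter] at hcompl
  exact ⟨t, (mem_biUnion_iff_useCount_pos U).2 (by omega), card_pos.1 hcompl⟩

/-- Under the coalitional Tijs value (closed-form union totals),
if no section that was shared between unions becomes exclusive to the alliance
after merging unions `1,…,a` (`K_{P*}^{se} = ∅`), then the alliance's total is
at most the sum of the pre-merge totals, with strict inequality iff the
alliance shares some section with an outside union and some section is used by
at least two unions of the alliance. -/
theorem coalitional_tijs_alliance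
    {N K : Type*} [Fintype N] [DecidableEq N] [Fintype K] [DecidableEq K]
    (C : K → ℝ) (hC : ∀ t, 0 < C t)
    (T : N → Finset K) (hT : ∀ i, (T i).Nonempty)
    (hK : ∀ t : K, ∃ i, t ∈ T i)
    (A a : ℕ) (ha2 : 2 ≤ a) (haA : a ≤ A)
    (Pp : Fin A → Finset N)
    (hdis : ∀ b b' : Fin A, b ≠ b' → Disjoint (Pp b) (Pp b'))
    (hcov : ∀ i : N, ∃ b : Fin A, i ∈ Pp b)
    (hne : ∀ b : Fin A, (Pp b).Nonempty) :
    -- sections used by each union, and union-level usage counts (original game)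
    let U : Fin A → Finset K := fun b => (Pp b).biUnion T
    let At : K → ℕ := fun t => ((Finset.univ : Finset (Fin A)).filter (fun b => t ∈ U b)).card
    let cPe : Fin A → ℝ := fun b => ∑ t ∈ (U b).filter (fun t => At t = 1), C t
    let cPs : Fin A → ℝ := fun b => ∑ t ∈ (U b).filter (fun t => 1 < At t), C t
    let cPsM : ℝ := ∑ t ∈ Finset.univ.filter (fun t : K => 1 < At t), C t
    -- coalitional-Tijs total of union `b` in the original game
    let TT : Fin A → ℝ := fun b =>
      if Finset.univ.filter (fun t : K => 1 < At t) = ∅ then cPe b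
      else cPe b + cPsM * cPs b / ∑ b' : Fin A, cPs b'
    -- the alliance of unions `1,…,a` and the modified game
    let B : Finset (Fin A) := Finset.univ.filter (fun b => (b : ℕ) < a)
    let UA : Finset K := B.biUnion U
    let Outs : K → Finset (Fin A) := fun t =>
      Finset.univ.filter (fun b : Fin A => a ≤ (b : ℕ) ∧ t ∈ U b)
    let Ats : K → ℕ := fun t => (Outs t).card + (if t ∈ UA then 1 else 0)
    let cPeA : ℝ := ∑ t ∈ UA.filter (fun t => Ats t = 1), C t
    let cPsA : ℝ := ∑ t ∈ UA.filter (fun t => 1 < Ats t), C t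
    let cPsO : Fin A → ℝ := fun b => ∑ t ∈ (U b).filter (fun t => 1 < Ats t), C t
    let cPsMs : ℝ := ∑ t ∈ Finset.univ.filter (fun t : K => 1 < Ats t), C t
    -- coalitional-Tijs total of the alliance in the modified game
    let TTA : ℝ :=
      if Finset.univ.filter (fun t : K => 1 < Ats t) = ∅ then cPeA
      else cPeA + cPsMs * cPsA /
        (cPsA + ∑ b ∈ Finset.univ.filter (fun b : Fin A => a ≤ (b : ℕ)), cPsO b)
    -- hypothesis `K_{P*}^{se} = ∅`: no union-shared section becomes exclusive
    ∀ _hse : (∀ t : K, 1 < At t → 1 < Ats t),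
    TTA ≤ (∑ b ∈ B, TT b) ∧
      (TTA < (∑ b ∈ B, TT b) ↔
        (∃ t ∈ UA, (Outs t).Nonempty) ∧
          ∃ t : K, 1 < (B.filter (fun b => t ∈ U b)).card) :=
  coalitional_tijs_alliance_general C hC T A a Pp
end

section
/- The Owen value on generalized highway problems with a coalitional structure satisfies: (PO) the payments sum to the total cost C(K); (ETPA) two players in the same union using exactly the same sections pay the same; (ETPU) two unions using the same set of sections pay the same total; and (IIOC) a player's payment depends only on the restriction of the problem and partition to the sections that player uses. -/
open Finset

/-- A generalized highway problem with a coalitional structure: agents drawn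
from `𝒩`, sections from `𝒦`, union labels from `ℳ`.  `N` is the (finite) agent
set, `K` the section set, `C` the section costs, `T i` the sections used by
agent `i`, `M` the set of (nonempty) a priori unions and `u i` the union label
of agent `i`. -/
structure GHP (𝒩 𝒦 ℳ : Type*) where
  N : Finset 𝒩
  K : Finset 𝒦
  C : 𝒦 → ℝ
  T : 𝒩 → Finset 𝒦
  M : Finset ℳ
  u : 𝒩 → Option ℳ

namespace GHP

variable {𝒩 𝒦 ℳ : Type*} [DecidableEq 𝒩] [DecidableEq 𝒦] [DecidableEq ℳ]

/-- The members of the a priori union labelled `a`. -/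
def part (Γ : GHP 𝒩 𝒦 ℳ) (a : ℳ) : Finset 𝒩 :=
  Γ.N.filter (fun i => Γ.u i = some a)

/-- Validity of a generalized highway problem with a coalitional structure. -/
def Valid (Γ : GHP 𝒩 𝒦 ℳ) : Prop :=
  (∀ i ∈ Γ.N, (Γ.T i).Nonempty ∧ Γ.T i ⊆ Γ.K) ∧
  (∀ i, i ∉ Γ.N → Γ.T i = ∅) ∧
  (∀ t ∈ Γ.K, ∃ i ∈ Γ.N, t ∈ Γ.T i) ∧
  (∀ t, 0 ≤ Γ.C t) ∧ (∀ t, t ∉ Γ.K → Γ.C t = 0) ∧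
  (∀ i ∈ Γ.N, ∃ a ∈ Γ.M, Γ.u i = some a) ∧
  (∀ i, i ∉ Γ.N → Γ.u i = none) ∧
  (∀ a ∈ Γ.M, (Γ.part a).Nonempty)

/-- Restriction of a problem (and its partition) to a set of sections `K'`. -/
def restrict (Γ : GHP 𝒩 𝒦 ℳ) (K' : Finset 𝒦) : GHP 𝒩 𝒦 ℳ where
  N := Γ.N.filter (fun i => (Γ.T i ∩ K').Nonempty)
  K := K'
  C := fun t => if t ∈ K' then Γ.C t else 0
  T := fun i => if (Γ.T i ∩ K').Nonempty then Γ.T i ∩ K' else ∅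
  M := Γ.M.filter (fun a =>
    ((Γ.N.filter (fun i => (Γ.T i ∩ K').Nonempty)).filter
      (fun i => Γ.u i = some a)).Nonempty)
  u := fun i => if i ∈ Γ.N.filter (fun i => (Γ.T i ∩ K').Nonempty) then Γ.u i else none

/-- The sections used by union `a`. -/
def unionSections (Γ : GHP 𝒩 𝒦 ℳ) (a : ℳ) : Finset 𝒦 := (Γ.part a).biUnion Γ.T

/-- The set of unions using section `t`. -/
def usingUnions (Γ : GHP 𝒩 𝒦 ℳ) (t : 𝒦) : Finset ℳ :=
  Γ.M.filter (fun a => t ∈ Γ.unionSections a)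

/-- The set of agents using section `t`. -/
def usingAgents (Γ : GHP 𝒩 𝒦 ℳ) (t : 𝒦) : Finset 𝒩 :=
  Γ.N.filter (fun i => t ∈ Γ.T i)

/-- The members of `i`'s own union that use section `t`. -/
def usingMates (Γ : GHP 𝒩 𝒦 ℳ) (i : 𝒩) (t : 𝒦) : Finset 𝒩 :=
  (Γ.N.filter (fun j => Γ.u j = Γ.u i)).filter (fun j => t ∈ Γ.T j)

/-- The Owen value of a generalized highway problem with a coalitional
structure, in its explicit form `Ψ_i = Σ_{t∈T(i)} C(t)/(|𝒜_t|·|N_t^a|)`. -/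
noncomputable def owen (Γ : GHP 𝒩 𝒦 ℳ) (i : 𝒩) : ℝ :=
  ∑ t ∈ Γ.T i, Γ.C t / (((Γ.usingUnions t).card : ℝ) * ((Γ.usingMates i t).card : ℝ))

end GHP

open GHP

/-! The explicit Owen value splits the cost of each section `t` in two stages: equally among
the unions `𝒜_t` using `t`, then, inside each of them, equally among its members `N_t^a` using `t`.
Hence union `a` pays `∑ C(t)/|𝒜_t|` over the sections it uses, which depends only on that set of
sections (ETPU), and summing over the unions, which partition `N`, gives `C(K)` (PO).
The payment of `i` only involves `u i`, `T i` and, for `t ∈ T i`, `C t`, `𝒜_t` and `N_t^a`;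
restricting the problem to `T i` changes none of these (IIOC). -/

lemma Finset.sum_const_div_card {ι K : Type*} [Semifield K] [CharZero K] {s : Finset ι}
    (hs : s.Nonempty) (c : K) : ∑ _i ∈ s, c / #s = c := by
  have : (#s : K) ≠ 0 := Nat.cast_ne_zero.mpr hs.card_pos.ne'
  rw [sum_const, nsmul_eq_mul, mul_div_cancel₀ _ this]

namespace GHP

variable {𝒩 𝒦 ℳ : Type*} [DecidableEq ℳ]

lemma mem_part {Γ : GHP 𝒩 𝒦 ℳ} {a : ℳ} {i : 𝒩} : i ∈ Γ.part a ↔ i ∈ Γ.N ∧ Γ.u i = some a :=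
  mem_filter

lemma Valid.T_subset {Γ : GHP 𝒩 𝒦 ℳ} (hv : Γ.Valid) {i : 𝒩} (hi : i ∈ Γ.N) : Γ.T i ⊆ Γ.K :=
  (hv.1 i hi).2

lemma Valid.exists_mem_T {Γ : GHP 𝒩 𝒦 ℳ} (hv : Γ.Valid) {t : 𝒦} (ht : t ∈ Γ.K) :
    ∃ i ∈ Γ.N, t ∈ Γ.T i :=
  hv.2.2.1 t ht

lemma Valid.exists_u_eq_some {Γ : GHP 𝒩 𝒦 ℳ} (hv : Γ.Valid) {i : 𝒩} (hi : i ∈ Γ.N) :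
    ∃ a ∈ Γ.M, Γ.u i = some a :=
  hv.2.2.2.2.2.1 i hi

lemma sum_eq_sum_sum_part {Γ : GHP 𝒩 𝒦 ℳ} (hv : Γ.Valid) (f : 𝒩 → ℝ) :
    ∑ i ∈ Γ.N, f i = ∑ a ∈ Γ.M, ∑ i ∈ Γ.part a, f i := by
  have hmaps : ∀ i ∈ Γ.N, Γ.u i ∈ Γ.M.map Function.Embedding.some := fun i hi => by
    obtain ⟨a, ha, hia⟩ := hv.exists_u_eq_some hi
    exact hia ▸ mem_map_of_mem _ ha
  rw [← sum_fiberwise_of_maps_to hmaps, sum_map]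
  rfl

variable [DecidableEq 𝒦]

lemma mem_unionSections {Γ : GHP 𝒩 𝒦 ℳ} {a : ℳ} {t : 𝒦} :
    t ∈ Γ.unionSections a ↔ ∃ i ∈ Γ.part a, t ∈ Γ.T i :=
  mem_biUnion

lemma usingMates_of_u_eq_some (Γ : GHP 𝒩 𝒦 ℳ) {i : 𝒩} {a : ℳ} (h : Γ.u i = some a) (t : 𝒦) :
    Γ.usingMates i t = {j ∈ Γ.part a | t ∈ Γ.T j} := by
  simp only [usingMates, part, h]

lemma owen_eq_of_u_eq_of_T_eq (Γ : GHP 𝒩 𝒦 ℳ) {i j : 𝒩} (hu : Γ.u i = Γ.u j)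
    (hT : Γ.T i = Γ.T j) : Γ.owen i = Γ.owen j := by
  simp only [owen, usingMates, hu, hT]

lemma sum_owen_term_mates (Γ : GHP 𝒩 𝒦 ℳ) {a : ℳ} {t : 𝒦} (ht : t ∈ Γ.unionSections a) :
    ∑ i ∈ Γ.part a with t ∈ Γ.T i,
      Γ.C t / ((#(Γ.usingUnions t) : ℝ) * #(Γ.usingMates i t))
      = Γ.C t / #(Γ.usingUnions t) := by
  set S := {i ∈ Γ.part a | t ∈ Γ.T i}
  obtain ⟨j, hj, hjt⟩ := mem_unionSections.mp ht
  calc _ = ∑ _i ∈ S, Γ.C t / #(Γ.usingUnions t) / #S := by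
        refine sum_congr rfl fun i hi => ?_
        rw [div_div, usingMates_of_u_eq_some Γ (mem_part.mp (mem_filter.mp hi).1).2]
    _ = _ := sum_const_div_card ⟨j, mem_filter.mpr ⟨hj, hjt⟩⟩ _

lemma sum_part_owen (Γ : GHP 𝒩 𝒦 ℳ) (a : ℳ) :
    ∑ i ∈ Γ.part a, Γ.owen i = ∑ t ∈ Γ.unionSections a, Γ.C t / #(Γ.usingUnions t) := by
  rw [← sum_congr rfl fun t ht => sum_owen_term_mates Γ ht]
  refine sum_comm' fun i t => ?_
  simp only [mem_filter, mem_unionSections]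
  exact ⟨fun ⟨hi, ht⟩ => ⟨⟨hi, ht⟩, i, hi, ht⟩, fun ⟨h, _⟩ => h⟩

lemma unionSections_subset {Γ : GHP 𝒩 𝒦 ℳ} (hv : Γ.Valid) {a : ℳ} :
    Γ.unionSections a ⊆ Γ.K :=
  biUnion_subset.mpr fun _ hi => hv.T_subset (mem_part.mp hi).1

lemma usingUnions_nonempty {Γ : GHP 𝒩 𝒦 ℳ} (hv : Γ.Valid) {t : 𝒦} (ht : t ∈ Γ.K) :
    (Γ.usingUnions t).Nonempty := by
  obtain ⟨i, hi, hit⟩ := hv.exists_mem_T ht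
  obtain ⟨a, ha, hia⟩ := hv.exists_u_eq_some hi
  exact ⟨a, mem_filter.mpr ⟨ha, mem_unionSections.mpr ⟨i, mem_part.mpr ⟨hi, hia⟩, hit⟩⟩⟩

theorem sum_owen {Γ : GHP 𝒩 𝒦 ℳ} (hv : Γ.Valid) : ∑ i ∈ Γ.N, Γ.owen i = ∑ t ∈ Γ.K, Γ.C t := by
  calc ∑ i ∈ Γ.N, Γ.owen i
      = ∑ a ∈ Γ.M, ∑ t ∈ Γ.unionSections a, Γ.C t / #(Γ.usingUnions t) := by
        simp only [sum_eq_sum_sum_part hv, sum_part_owen]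
    _ = ∑ t ∈ Γ.K, ∑ _a ∈ Γ.usingUnions t, Γ.C t / #(Γ.usingUnions t) := by
        refine sum_comm' fun a t => ?_
        simp only [usingUnions, mem_filter]
        exact ⟨fun ⟨ha, ht⟩ => ⟨⟨ha, ht⟩, unionSections_subset hv ht⟩, fun ⟨h, _⟩ => h⟩
    _ = ∑ t ∈ Γ.K, Γ.C t :=
        sum_congr rfl fun t ht => sum_const_div_card (usingUnions_nonempty hv ht) _

lemma mem_unionSections_iff_usingAgents (Γ : GHP 𝒩 𝒦 ℳ) {a : ℳ} {t : 𝒦} :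
    t ∈ Γ.unionSections a ↔ ∃ j ∈ Γ.usingAgents t, Γ.u j = some a := by
  simp only [mem_unionSections, mem_part, usingAgents, mem_filter]
  exact ⟨fun ⟨j, ⟨hj, hja⟩, hjt⟩ => ⟨j, ⟨hj, hjt⟩, hja⟩, fun ⟨j, ⟨hj, hjt⟩, hja⟩ => ⟨j, ⟨hj, hja⟩, hjt⟩⟩

lemma usingMates_eq_filter_usingAgents (Γ : GHP 𝒩 𝒦 ℳ) (i : 𝒩) (t : 𝒦) :
    Γ.usingMates i t = {j ∈ Γ.usingAgents t | Γ.u j = Γ.u i} :=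
  filter_comm _ _ _

section Restrict

variable [DecidableEq 𝒩] (Γ : GHP 𝒩 𝒦 ℳ) {K' : Finset 𝒦}

lemma mem_restrict_N {i : 𝒩} : i ∈ (Γ.restrict K').N ↔ i ∈ Γ.N ∧ (Γ.T i ∩ K').Nonempty :=
  mem_filter

lemma mem_restrict_T {i : 𝒩} {t : 𝒦} : t ∈ (Γ.restrict K').T i ↔ t ∈ Γ.T i ∧ t ∈ K' := by
  simp only [restrict]
  split_ifs with h
  · exact mem_inter
  · exact ⟨fun h' => absurd h' (notMem_empty t), fun h' => absurd ⟨t, mem_inter.mpr h'⟩ h⟩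

lemma restrict_u_of_mem {i : 𝒩} (hi : i ∈ (Γ.restrict K').N) : (Γ.restrict K').u i = Γ.u i :=
  if_pos hi

lemma restrict_C_of_mem {t : 𝒦} (ht : t ∈ K') : (Γ.restrict K').C t = Γ.C t :=
  if_pos ht

lemma restrict_T_self (i : 𝒩) : (Γ.restrict (Γ.T i)).T i = Γ.T i := by
  ext t
  rw [mem_restrict_T, and_self]

lemma usingAgents_restrict {t : 𝒦} (ht : t ∈ K') :
    (Γ.restrict K').usingAgents t = Γ.usingAgents t := by
  ext j
  simp only [usingAgents, mem_filter, mem_restrict_N, mem_restrict_T]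
  exact ⟨fun ⟨⟨hj, _⟩, hjt, _⟩ => ⟨hj, hjt⟩, fun ⟨hj, hjt⟩ => ⟨⟨hj, t, mem_inter.mpr ⟨hjt, ht⟩⟩, hjt, ht⟩⟩

lemma mem_restrict_N_of_mem_usingAgents {j : 𝒩} {t : 𝒦} (ht : t ∈ K')
    (hj : j ∈ Γ.usingAgents t) : j ∈ (Γ.restrict K').N :=
  (mem_filter.mp ((usingAgents_restrict Γ ht).symm ▸ hj)).1

lemma usingMates_restrict {i : 𝒩} {t : 𝒦} (hi : i ∈ (Γ.restrict K').N) (ht : t ∈ K') :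
    (Γ.restrict K').usingMates i t = Γ.usingMates i t := by
  rw [usingMates_eq_filter_usingAgents, usingMates_eq_filter_usingAgents, usingAgents_restrict Γ ht,
    restrict_u_of_mem Γ hi]
  exact filter_congr fun j hj => by
    rw [restrict_u_of_mem Γ (mem_restrict_N_of_mem_usingAgents Γ ht hj)]

lemma mem_unionSections_restrict {a : ℳ} {t : 𝒦} (ht : t ∈ K') :
    t ∈ (Γ.restrict K').unionSections a ↔ t ∈ Γ.unionSections a := by
  simp only [mem_unionSections_iff_usingAgents, usingAgents_restrict Γ ht]
  exact exists_congr fun j => and_congr_right fun hj => by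
    rw [restrict_u_of_mem Γ (mem_restrict_N_of_mem_usingAgents Γ ht hj)]

lemma usingUnions_restrict {t : 𝒦} (ht : t ∈ K') :
    (Γ.restrict K').usingUnions t = Γ.usingUnions t := by
  ext a
  simp only [usingUnions, mem_filter, mem_unionSections_restrict Γ ht]
  refine and_congr_left fun hta => mem_filter.trans (and_iff_left ?_)
  obtain ⟨j, hj, hja⟩ := (mem_unionSections_iff_usingAgents Γ).mp hta
  exact ⟨j, mem_filter.mpr ⟨mem_restrict_N_of_mem_usingAgents Γ ht hj, hja⟩⟩

theorem owen_restrict_T {i : 𝒩} (hi : i ∈ Γ.N) : (Γ.restrict (Γ.T i)).owen i = Γ.owen i := by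
  simp only [owen, restrict_T_self]
  refine sum_congr rfl fun t ht => ?_
  have hi' : i ∈ (Γ.restrict (Γ.T i)).N := (mem_restrict_N Γ).mpr ⟨hi, t, mem_inter.mpr ⟨ht, ht⟩⟩
  rw [restrict_C_of_mem Γ ht, usingUnions_restrict Γ ht, usingMates_restrict Γ hi' ht]

end Restrict

end GHP

/-- the Owen value on generalized highway problems with a
coalitional structure satisfies (PO), (ETPA), (ETPU) and (IIOC). -/
theorem owen_satisfies_PO_ETPA_ETPU_IIOC
    {𝒩 𝒦 ℳ : Type*} [DecidableEq 𝒩] [DecidableEq 𝒦] [DecidableEq ℳ] :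
    -- (PO)
    (∀ Γ : GHP 𝒩 𝒦 ℳ, Γ.Valid → ∑ i ∈ Γ.N, Γ.owen i = ∑ t ∈ Γ.K, Γ.C t) ∧
    -- (ETPA)
    (∀ Γ : GHP 𝒩 𝒦 ℳ, Γ.Valid → ∀ a ∈ Γ.M, ∀ i ∈ Γ.part a, ∀ j ∈ Γ.part a,
      Γ.T i = Γ.T j → Γ.owen i = Γ.owen j) ∧
    -- (ETPU)
    (∀ Γ : GHP 𝒩 𝒦 ℳ, Γ.Valid → ∀ a ∈ Γ.M, ∀ b ∈ Γ.M,
      Γ.unionSections a = Γ.unionSections b →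
      ∑ i ∈ Γ.part a, Γ.owen i = ∑ i ∈ Γ.part b, Γ.owen i) ∧
    -- (IIOC)
    (∀ Γ Γ' : GHP 𝒩 𝒦 ℳ, Γ.Valid → Γ'.Valid → ∀ i, i ∈ Γ.N → i ∈ Γ'.N →
      Γ.restrict (Γ.T i) = Γ'.restrict (Γ'.T i) → Γ.owen i = Γ'.owen i) := by
  refine ⟨fun Γ hv => sum_owen hv, ?_, ?_, ?_⟩
  · intro Γ _ a _ i hi j hj hT
    exact owen_eq_of_u_eq_of_T_eq Γ ((mem_part.mp hi).2.trans (mem_part.mp hj).2.symm) hT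
  · intro Γ _ a _ b _ hab
    rw [sum_part_owen, sum_part_owen, hab]
  · intro Γ Γ' _ _ i hi hi' h
    rw [← owen_restrict_T Γ hi, ← owen_restrict_T Γ' hi', h]
end

section
/- The Shapley-Tijs value on generalized highway problems with a coalitional structure, defined for i ∈ P_a by Λ_i = c^e(i) if no section is shared among agents, and Λ_i = c^e(i) + (Ψ_a − c^e(a))·c^s(i)/Σ_{j∈P_a} c^s(j) otherwise (where Ψ_a = Σ_{t∈T(P_a)} C(t)/|𝒜_t| and c^e(a) = Σ_{j∈P_a} c^e(j)), satisfies Pareto optimality: Σ_{i∈N} Λ_i = Σ_{t∈K} C(t). -/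
/-!
Every section is charged exactly once. Without shared sections each agent pays its own
(exclusive) sections. Otherwise the weights `c^s(i) / Σ_{j ∈ P_a} c^s(j)` sum to one over a
union, so union `a` pays `c^e(a) + (Ψ_a - c^e(a)) = Ψ_a` in total, and `Σ_a Ψ_a = Σ_t C(t)`
because each of the `|𝒜_t|` unions using `t` is charged `C(t) / |𝒜_t|`.
-/

open Finset

section DoubleCounting

variable {ι κ R : Type*} [Fintype ι] [Fintype κ] [DecidableEq κ]

theorem Finset.sum_sum_mem_eq_sum_card_nsmul [AddCommMonoid R] (S : ι → Finset κ)
    (g : κ → R) :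
    ∑ i, ∑ t ∈ S i, g t = ∑ t, #{i | t ∈ S i} • g t := by
  rw [sum_comm' (t' := univ) (s' := fun t => {i | t ∈ S i}) (by simp)]
  simp only [sum_const]

theorem Finset.sum_sum_filter_card_eq_one [AddCommMonoid R] (S : ι → Finset κ) (g : κ → R) :
    ∑ i, ∑ t ∈ S i with #{j | t ∈ S j} = 1, g t = ∑ t with #{j | t ∈ S j} = 1, g t := by
  simp only [sum_filter, sum_sum_mem_eq_sum_card_nsmul, smul_ite, smul_zero]
  refine sum_congr rfl fun t _ => ?_
  split_ifs with h <;> simp [h]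

theorem Finset.sum_sum_div_card_eq_sum [Semifield R] [CharZero R] (S : ι → Finset κ)
    (hS : ∀ t, ∃ i, t ∈ S i) (g : κ → R) :
    ∑ i, ∑ t ∈ S i, g t / #{j | t ∈ S j} = ∑ t, g t := by
  rw [sum_sum_mem_eq_sum_card_nsmul]
  refine sum_congr rfl fun t _ => ?_
  obtain ⟨i, hi⟩ := hS t
  have hpos : (#{j | t ∈ S j} : R) ≠ 0 :=
    Nat.cast_ne_zero.2 (card_ne_zero_of_mem (by simpa using hi))
  rw [nsmul_eq_mul, mul_div_cancel₀ _ hpos]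

end DoubleCounting

theorem Finset.sum_mul_div_sum_self {ι R : Type*} [DivisionSemiring R] (s : Finset ι) (c : R)
    (w : ι → R) (hw : ∑ j ∈ s, w j ≠ 0) : ∑ i ∈ s, c * w i / ∑ j ∈ s, w j = c := by
  rw [← sum_div, ← mul_sum, mul_div_cancel_right₀ _ hw]

section Partition

variable {N M : Type*} {Pp : M → Finset N}

theorem eq_of_mem_of_pairwise_disjoint (hdis : ∀ a b : M, a ≠ b → Disjoint (Pp a) (Pp b))
    {part : N → M} (hpart : ∀ i, i ∈ Pp (part i)) {a : M} {i : N} (hi : i ∈ Pp a) :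
    part i = a := by
  by_contra h
  exact disjoint_left.1 (hdis _ _ h) (hpart i) hi

theorem sum_eq_sum_sum_of_pairwise_disjoint_of_cover [Fintype N] [Fintype M] [DecidableEq N]
    {R : Type*} [AddCommMonoid R] (hdis : ∀ a b : M, a ≠ b → Disjoint (Pp a) (Pp b))
    (hcov : ∀ i, ∃ a, i ∈ Pp a) (f : N → R) : ∑ i, f i = ∑ a, ∑ i ∈ Pp a, f i := by
  have hunion : univ.biUnion Pp = univ :=
    eq_univ_of_forall fun i => let ⟨a, hi⟩ := hcov i; mem_biUnion.2 ⟨a, mem_univ a, hi⟩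
  rw [← sum_biUnion fun a _ b _ hab => hdis a b hab, hunion]

end Partition

theorem shapley_tijs_pareto_optimal_general
    {N K M : Type*} [Fintype N] [DecidableEq N] [Fintype K] [DecidableEq K]
    [Fintype M]
    (C : K → ℝ)
    (T : N → Finset K)
    (hK : ∀ t : K, ∃ i, t ∈ T i)
    (Pp : M → Finset N)
    (hdis : ∀ a b : M, a ≠ b → Disjoint (Pp a) (Pp b))
    (part : N → M) (hpart : ∀ i : N, i ∈ Pp (part i)) :
    -- shared/exclusive classification and costs
    let Nt : K → Finset N := fun t => Finset.univ.filter (fun j => t ∈ T j)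
    let ce : N → ℝ := fun i => ∑ t ∈ (T i).filter (fun t => (Nt t).card = 1), C t
    let cs : N → ℝ := fun i => ∑ t ∈ (T i).filter (fun t => 1 < (Nt t).card), C t
    let Ks : Finset K := Finset.univ.filter (fun t => 1 < (Nt t).card)
    -- Shapley value of union `a` in the quotient game
    let 𝒜 : K → Finset M := fun t => Finset.univ.filter (fun b => t ∈ (Pp b).biUnion T)
    let Ψ : M → ℝ := fun a => ∑ t ∈ (Pp a).biUnion T, C t / ((𝒜 t).card : ℝ)
    let cea : M → ℝ := fun a => ∑ j ∈ Pp a, ce j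
    -- the Shapley-Tijs value
    let Λ : N → ℝ := fun i =>
      if Ks = ∅ then ce i
      else ce i + (Ψ (part i) - cea (part i)) * cs i / ∑ j ∈ Pp (part i), cs j
    -- positive denominators whenever shared sections exist
    ∀ _hden : (Ks ≠ ∅ → ∀ a : M, 0 < ∑ j ∈ Pp a, cs j),
    ∑ i : N, Λ i = ∑ t : K, C t := by
  intro Nt ce cs Ks 𝒜 Ψ cea Λ hden
  have hgroup := sum_eq_sum_sum_of_pairwise_disjoint_of_cover (R := ℝ) hdis
    fun i => ⟨part i, hpart i⟩
  by_cases hKs : Ks = ∅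
  · have hexcl : ∀ t, #(Nt t) = 1 := fun t => by
      have hshared : ¬ 1 < #(Nt t) := fun h =>
        eq_empty_iff_forall_notMem.1 hKs t (mem_filter.2 ⟨mem_univ t, h⟩)
      obtain ⟨i, hi⟩ := hK t
      have hpos : 0 < #(Nt t) := card_pos.2 ⟨i, by simpa [Nt] using hi⟩
      omega
    simp only [Λ, if_pos hKs]
    exact (sum_sum_filter_card_eq_one T C).trans <|
      sum_congr (filter_true_of_mem fun t _ => hexcl t) fun _ _ => rfl
  · have hshare (a : M) :
        ∑ i ∈ Pp a, (Ψ (part i) - cea (part i)) * cs i / ∑ j ∈ Pp (part i), cs j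
          = Ψ a - cea a := by
      rw [sum_congr rfl fun i hi => by rw [eq_of_mem_of_pairwise_disjoint hdis hpart hi]]
      exact sum_mul_div_sum_self _ _ _ (hden hKs a).ne'
    have hΨ : ∑ a, Ψ a = ∑ t, C t :=
      sum_sum_div_card_eq_sum (fun a => (Pp a).biUnion T)
        (fun t => let ⟨i, hi⟩ := hK t; ⟨part i, mem_biUnion.2 ⟨i, hpart i, hi⟩⟩) C
    calc ∑ i, Λ i = ∑ i, ce i + ∑ a, (Ψ a - cea a) := by
          simp only [Λ, if_neg hKs, sum_add_distrib, hgroup (fun i => _ * cs i / _), hshare]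
      _ = ∑ t, C t := by
          rw [sum_sub_distrib, hΨ, hgroup ce]
          ring

/-- the Shapley-Tijs value of a generalized highway problem with
a priori unions satisfies Pareto optimality: the payments sum to the total cost
`Σ_{t∈K} C(t)`. -/
theorem shapley_tijs_pareto_optimal
    {N K M : Type*} [Fintype N] [DecidableEq N] [Fintype K] [DecidableEq K]
    [Fintype M] [DecidableEq M]
    (C : K → ℝ) (hC : ∀ t, 0 ≤ C t)
    (T : N → Finset K) (hT : ∀ i, (T i).Nonempty)
    (hK : ∀ t : K, ∃ i, t ∈ T i)
    (Pp : M → Finset N)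
    (hdis : ∀ a b : M, a ≠ b → Disjoint (Pp a) (Pp b))
    (hcov : ∀ i : N, ∃ a : M, i ∈ Pp a)
    (hne : ∀ a : M, (Pp a).Nonempty)
    (part : N → M) (hpart : ∀ i : N, i ∈ Pp (part i)) :
    -- shared/exclusive classification and costs
    let Nt : K → Finset N := fun t => Finset.univ.filter (fun j => t ∈ T j)
    let ce : N → ℝ := fun i => ∑ t ∈ (T i).filter (fun t => (Nt t).card = 1), C t
    let cs : N → ℝ := fun i => ∑ t ∈ (T i).filter (fun t => 1 < (Nt t).card), C t
    let Ks : Finset K := Finset.univ.filter (fun t => 1 < (Nt t).card)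
    -- Shapley value of union `a` in the quotient game
    let 𝒜 : K → Finset M := fun t => Finset.univ.filter (fun b => t ∈ (Pp b).biUnion T)
    let Ψ : M → ℝ := fun a => ∑ t ∈ (Pp a).biUnion T, C t / ((𝒜 t).card : ℝ)
    let cea : M → ℝ := fun a => ∑ j ∈ Pp a, ce j
    -- the Shapley-Tijs value
    let Λ : N → ℝ := fun i =>
      if Ks = ∅ then ce i
      else ce i + (Ψ (part i) - cea (part i)) * cs i / ∑ j ∈ Pp (part i), cs j
    -- positive denominators whenever shared sections exist
    ∀ _hden : (Ks ≠ ∅ → ∀ a : M, 0 < ∑ j ∈ Pp a, cs j),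
    ∑ i : N, Λ i = ∑ t : K, C t :=
  shapley_tijs_pareto_optimal_general C T hK Pp hdis part hpart
end
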